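/- arXiv:math-ph/0603047 — 8 statements merged into one kernel-verified Lean document; each statement's English description precedes it below -/
import Mathlib

section
/- Let p ∈ (0,1), ε > 0, β > 0 and μ ∈ ℝ with μ ≠ 1 and μ ≠ 1+ε. If F_{p,ε}(β,μ) = 1, then β ≥ 2. (In particular, any critical inverse temperature for the hard-core Bernoulli model is at least 2.) -/
noncomputable def F (p ε β μ : ℝ) : ℝ :=
  p * Real.tanh (β * (μ - ε - 1) / 2) / (μ - ε - 1) +
  (1 - p) * Real.tanh (β * (μ - 1) / 2) / (μ - 1)

lemma sinh_le_mul_cosh {x : ℝ} (hx : 0 ≤ x) : Real.sinh x ≤ x * Real.cosh x := by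
  have hmono : MonotoneOn (fun y : ℝ => y * Real.cosh y - Real.sinh y) (Set.Ici 0) := by
    apply monotoneOn_of_deriv_nonneg (convex_Ici 0)
    · exact (Continuous.sub (continuous_id.mul Real.continuous_cosh)
        Real.continuous_sinh).continuousOn
    · intro y _
      exact (((hasDerivAt_id y).mul (Real.hasDerivAt_cosh y)).sub
        (Real.hasDerivAt_sinh y)).differentiableAt.differentiableWithinAt
    · intro y hy
      have hd : HasDerivAt (fun y : ℝ => y * Real.cosh y - Real.sinh y)
          (1 * Real.cosh y + y * Real.sinh y - Real.cosh y) y :=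
        ((hasDerivAt_id y).mul (Real.hasDerivAt_cosh y)).sub (Real.hasDerivAt_sinh y)
      rw [hd.deriv]
      have hy0 : 0 ≤ y := le_of_lt (by simpa using hy)
      have := Real.sinh_nonneg_iff.mpr hy0
      nlinarith
  have h0 : (0 : ℝ) * Real.cosh 0 - Real.sinh 0 = 0 := by simp
  have := hmono (Set.self_mem_Ici) (Set.mem_Ici.mpr hx) hx
  simp only [h0] at this
  linarith [this]

lemma tanh_le_self {x : ℝ} (hx : 0 ≤ x) : Real.tanh x ≤ x := by
  rw [Real.tanh_eq_sinh_div_cosh, div_le_iff₀ (Real.cosh_pos x)]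
  exact sinh_le_mul_cosh hx

lemma key (β : ℝ) (hβ : 0 < β) {x : ℝ} (hx : x ≠ 0) :
    Real.tanh (β * x / 2) / x ≤ β / 2 := by
  rcases lt_or_gt_of_ne hx with h | h
  · have hu : 0 ≤ -(β * x / 2) := by nlinarith
    have := tanh_le_self hu
    rw [Real.tanh_neg] at this
    have h1 : β * x / 2 ≤ Real.tanh (β * x / 2) := by linarith
    rw [div_le_iff_of_neg h]
    nlinarith
  · have hu : 0 ≤ β * x / 2 := by positivity
    have := tanh_le_self hu
    rw [div_le_iff₀ h]
    nlinarith

theorem stmt_0 (p ε β μ : ℝ) (hp : 0 < p) (hp1 : p < 1) (hε : 0 < ε) (hβ : 0 < β)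
    (hμ1 : μ ≠ 1) (hμ2 : μ ≠ 1 + ε) (hF : F p ε β μ = 1) : 2 ≤ β := by
  have hx1 : μ - ε - 1 ≠ 0 := by
    intro h; apply hμ2; linarith [sub_eq_zero.mp (by linarith : μ - (1 + ε) = 0)]
  have hx2 : μ - 1 ≠ 0 := sub_ne_zero.mpr hμ1
  have h1 := key β hβ hx1
  have h2 := key β hβ hx2
  unfold F at hF
  have e1 : p * Real.tanh (β * (μ - ε - 1) / 2) / (μ - ε - 1)
      = p * (Real.tanh (β * (μ - ε - 1) / 2) / (μ - ε - 1)) := by ring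
  have e2 : (1 - p) * Real.tanh (β * (μ - 1) / 2) / (μ - 1)
      = (1 - p) * (Real.tanh (β * (μ - 1) / 2) / (μ - 1)) := by ring
  rw [e1, e2] at hF
  nlinarith [mul_le_mul_of_nonneg_left h1 hp.le,
    mul_le_mul_of_nonneg_left h2 (by linarith : (0:ℝ) ≤ 1 - p)]
end

section
/- Let 0 < p ≤ 1/2 and ε ≥ 1/p. Then there is no pair (β, μ) with β > 0, μ ∈ ℝ, μ ≠ 1, μ ≠ 1+ε satisfying simultaneously F_{p,ε}(β,μ) = 1 and G_{p,ε}(β,μ) = 1−p. (Bose–Einstein condensation is completely suppressed at density ρ = 1−p when the Bernoulli disorder amplitude satisfies ε ≥ 1/p.) -/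
noncomputable def G (p ε β μ : ℝ) : ℝ :=
  1 / 2 + (1 / 2) * (p * Real.tanh (β * (μ - ε - 1) / 2) +
    (1 - p) * Real.tanh (β * (μ - 1) / 2))

lemma tanh_le_self_s3 {z : ℝ} (hz : 0 ≤ z) : Real.tanh z ≤ z := by
  have hmono : MonotoneOn (fun w : ℝ => w * Real.cosh w - Real.sinh w) (Set.Ici 0) := by
    apply monotoneOn_of_deriv_nonneg (convex_Ici 0)
    · exact ((continuous_id.mul Real.continuous_cosh).sub Real.continuous_sinh).continuousOn
    · intro w _
      exact ((differentiableAt_id.mul Real.differentiable_cosh.differentiableAt).sub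
        Real.differentiable_sinh.differentiableAt).differentiableWithinAt
    · intro w hw
      rw [interior_Ici, Set.mem_Ioi] at hw
      have h1 : HasDerivAt (fun w : ℝ => w * Real.cosh w - Real.sinh w)
          (1 * Real.cosh w + w * Real.sinh w - Real.cosh w) w :=
        ((hasDerivAt_id w).mul (Real.hasDerivAt_cosh w)).sub (Real.hasDerivAt_sinh w)
      rw [h1.deriv]
      have h2 : (0:ℝ) ≤ w * Real.sinh w :=
        mul_nonneg hw.le (Real.sinh_nonneg_iff.2 hw.le)
      linarith
  have h0 := hmono (Set.self_mem_Ici) (Set.mem_Ici.2 hz) hz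
  simp only [Real.sinh_zero, Real.cosh_zero, mul_one, zero_mul, sub_zero, zero_sub] at h0
  have h0' : Real.sinh z ≤ z * Real.cosh z := by simp at h0; linarith
  rw [Real.tanh_eq_sinh_div_cosh, div_le_iff₀ (Real.cosh_pos z)]
  exact h0'

lemma tanh_exp_formula (z : ℝ) :
    Real.tanh z = (Real.exp (2 * z) - 1) / (Real.exp (2 * z) + 1) := by
  rw [Real.tanh_eq_sinh_div_cosh, Real.sinh_eq, Real.cosh_eq]
  have h1 : Real.exp (2 * z) = Real.exp z * Real.exp z := by
    rw [two_mul, Real.exp_add]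
  have hez : Real.exp z ≠ 0 := (Real.exp_pos z).ne'
  have hez2 : Real.exp z + Real.exp (-z) ≠ 0 := by positivity
  have hez3 : Real.exp z * Real.exp z + 1 ≠ 0 := by positivity
  rw [h1, Real.exp_neg]
  field_simp

set_option maxHeartbeats 1000000 in
theorem stmt_3 (p ε : ℝ) (hp : 0 < p) (hp1 : p ≤ 1 / 2) (hε : 1 / p ≤ ε) :
    ¬ ∃ β μ : ℝ, 0 < β ∧ μ ≠ 1 ∧ μ ≠ 1 + ε ∧
      F p ε β μ = 1 ∧ G p ε β μ = 1 - p := by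
  rintro ⟨β, μ, hβ, hμ1, hμ2, hF, hG⟩
  simp only [F] at hF
  simp only [G] at hG
  set y : ℝ := μ - ε - 1 with hy_def
  set x : ℝ := μ - 1 with hx_def
  set t : ℝ := β / 2 with ht_def
  have ht : 0 < t := by positivity
  have hx0 : x ≠ 0 := sub_ne_zero.2 hμ1
  have hy0 : y ≠ 0 := by
    rw [hy_def]
    intro h
    exact hμ2 (by linarith)
  have hxy : x - y = ε := by rw [hx_def, hy_def]; ring
  have hp' : (0:ℝ) < 1 - p := by linarith
  have hεp : 1 ≤ p * ε := by
    rw [div_le_iff₀ hp] at hε; linarith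
  have hε2 : 2 ≤ ε := by
    have h2 : 2 ≤ 1 / p := by rw [le_div_iff₀ hp]; linarith
    linarith
  have hε0 : 0 < ε := by linarith
  have e1 : β * y / 2 = t * y := by rw [ht_def]; ring
  have e2 : β * x / 2 = t * x := by rw [ht_def]; ring
  rw [e1, e2] at hF hG
  set u : ℝ := Real.tanh (t * y) with hu_def
  set v : ℝ := Real.tanh (t * x) with hv_def
  set P : ℝ := Real.exp (2 * (t * y)) with hP_def
  set Q : ℝ := Real.exp (2 * (t * x)) with hQ_def
  have hP0 : 0 < P := Real.exp_pos _
  have hQ0 : 0 < Q := Real.exp_pos _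
  have huP : u = (P - 1) / (P + 1) := tanh_exp_formula (t * y)
  have hvQ : v = (Q - 1) / (Q + 1) := tanh_exp_formula (t * x)
  clear_value y x t u v P Q
  have hG' : p * u + (1 - p) * v = 1 - 2 * p := by linarith
  -- key identity from the density equation
  have hI : p * P * (Q + 1) = (1 - p) * (P + 1) := by
    rw [huP, hvQ] at hG'
    have hP1 : P + 1 ≠ 0 := by positivity
    have hQ1 : Q + 1 ≠ 0 := by positivity
    field_simp at hG'
    linear_combination hG' / 2
  -- t ≥ 1
  have hut : u / y ≤ t := by
    rcases lt_or_gt_of_ne hy0 with hyneg | hypos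
    · have h1 : t * y ≤ u := by
        have h := tanh_le_self_s3 (z := -(t * y))
          (by linarith only [mul_pos ht (neg_pos.2 hyneg)])
        rw [Real.tanh_neg] at h
        rw [hu_def]; linarith
      rw [div_le_iff_of_neg hyneg]
      linarith
    · have h1 : u ≤ t * y := by
        have h := tanh_le_self_s3 (z := t * y) (le_of_lt (mul_pos ht hypos))
        rw [hu_def]; linarith
      rw [div_le_iff₀ hypos]
      linarith
  have hvt : v / x ≤ t := by
    rcases lt_or_gt_of_ne hx0 with hxneg | hxpos
    · have h1 : t * x ≤ v := by
        have h := tanh_le_self_s3 (z := -(t * x))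
          (by linarith only [mul_pos ht (neg_pos.2 hxneg)])
        rw [Real.tanh_neg] at h
        rw [hv_def]; linarith
      rw [div_le_iff_of_neg hxneg]
      linarith
    · have h1 : v ≤ t * x := by
        have h := tanh_le_self_s3 (z := t * x) (le_of_lt (mul_pos ht hxpos))
        rw [hv_def]; linarith
      rw [div_le_iff₀ hxpos]
      linarith
  have hFr : p * (u / y) + (1 - p) * (v / x) = 1 := by
    rw [mul_div_assoc, mul_div_assoc] at hF; exact hF
  have ht1 : 1 ≤ t := by
    linarith only [hFr, hp, hp1,
      mul_le_mul_of_nonneg_left hut hp.le,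
      mul_le_mul_of_nonneg_left hvt hp'.le]
  -- y must be negative
  have hyneg : y < 0 := by
    by_contra h
    push_neg at h
    have hypos : 0 < y := lt_of_le_of_ne h (Ne.symm hy0)
    have hxε : ε < x := by linarith only [hxy, hypos]
    have hxpos : 0 < x := by linarith only [hxε, hε0]
    have hP1 : 1 < P := by
      rw [hP_def]
      calc (1:ℝ) = Real.exp 0 := (Real.exp_zero).symm
        _ < Real.exp (2 * (t * y)) :=
          Real.exp_lt_exp.2 (by linarith only [mul_pos ht hypos])
    have hQbig : 1 + 2 * ε ≤ Q := by
      have h1 : 2 * ε ≤ 2 * (t * x) := by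
        linarith only [mul_le_mul_of_nonneg_right ht1 hxpos.le, hxε]
      calc 1 + 2 * ε ≤ 2 * (t * x) + 1 := by linarith only [h1]
        _ ≤ Q := by rw [hQ_def]; exact Real.add_one_le_exp _
    have hQp : 2 + p ≤ p * Q := by
      linarith only [mul_le_mul_of_nonneg_left hQbig hp.le, hεp]
    linarith only [hI, hp,
      mul_le_mul_of_nonneg_left hQp hP0.le,
      mul_lt_mul_of_pos_left hP1 (by linarith only [hp] : (0:ℝ) < 1 + 3 * p)]
  have hPlt1 : P < 1 := by
    rw [hP_def]
    calc Real.exp (2 * (t * y)) < Real.exp 0 :=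
          Real.exp_lt_exp.2 (by linarith only [mul_pos ht (neg_pos.2 hyneg)])
      _ = 1 := Real.exp_zero
  have hPQ : P * Q = Real.exp (2 * t * (x + y)) := by
    rw [hP_def, hQ_def, ← Real.exp_add]
    ring_nf
  have hPQ1 : 1 ≤ P * Q := by
    by_contra h
    push_neg at h
    linarith only [hI, hp1, hp,
      mul_nonneg (by linarith only [hp1] : (0:ℝ) ≤ 1 - 2 * p) hP0.le,
      mul_lt_mul_of_pos_left h hp]
  have hxy0 : 0 ≤ x + y := by
    by_contra h
    push_neg at h
    have h2 : Real.exp (2 * t * (x + y)) < Real.exp 0 :=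
      Real.exp_lt_exp.2 (by
        have h3 := mul_pos ht (neg_pos.2 h)
        linarith only [h3])
    rw [Real.exp_zero] at h2
    linarith only [hPQ, h2, hPQ1, hPQ ▸ h2]
  have hx2 : ε / 2 ≤ x := by linarith only [hxy, hxy0]
  have hxpos : 0 < x := by linarith only [hx2, hε0]
  -- -y < 2p
  have hu_gt : -1 < u := by
    rw [huP, lt_div_iff₀ (by positivity : (0:ℝ) < P + 1)]
    linarith only [hP0]
  have hv_lt : v < 1 := by
    rw [hvQ, div_lt_iff₀ (by positivity : (0:ℝ) < Q + 1)]
    linarith only [hQ0]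
  have hyn : 0 < -y := by linarith only [hyneg]
  have h1 : u / y < 1 / (-y) := by
    rw [lt_div_iff₀ hyn]
    have h1a : u / y * -y = -u := by field_simp
    rw [h1a]
    linarith only [hu_gt]
  have h2 : v / x < 1 / x := by
    rw [lt_div_iff₀ hxpos]
    have h2a : v / x * x = v := by field_simp
    rw [h2a]
    linarith only [hv_lt]
  have hiε : (1:ℝ) / x ≤ 2 * p := by
    rw [div_le_iff₀ hxpos]
    have h3 : 1 / p ≤ 2 * x := by linarith only [hε, hx2]
    rw [div_le_iff₀ hp] at h3
    linarith only [h3]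
  have hs : -y < 2 * p := by
    have h4 : 1 < p * (1 / (-y)) + (1 - p) * (1 / x) := by
      linarith only [hFr, mul_lt_mul_of_pos_left h1 hp, mul_lt_mul_of_pos_left h2 hp']
    have h5 : (1 - p) * (1 / x) ≤ (1:ℝ) / 2 := by
      linarith only [mul_le_mul_of_nonneg_left hiε hp'.le, sq_nonneg (2 * p - 1)]
    have h6 : (1:ℝ) / 2 < p * (1 / (-y)) := by linarith only [h4, h5]
    have h7 : (1 / (-y)) * (-y) = 1 := by field_simp
    have h8 : p * ((1 / (-y)) * (-y)) = p := by rw [h7]; ring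
    linarith only [mul_lt_mul_of_pos_right h6 hyn, h8]
  -- final contradiction
  have hfin1 : p * (P * Q) ≤ 2 - 3 * p := by
    linarith only [hI,
      mul_nonneg (by linarith only [hp1] : (0:ℝ) ≤ 1 - 2 * p)
        (by linarith only [hPlt1] : (0:ℝ) ≤ 1 - P)]
  have hfin2 : 1 + 2 * (x + y) ≤ P * Q := by
    have h8 : 2 * (x + y) ≤ 2 * t * (x + y) := by
      linarith only [mul_le_mul_of_nonneg_right ht1 hxy0]
    calc 1 + 2 * (x + y) ≤ 2 * t * (x + y) + 1 := by linarith only [h8]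
      _ ≤ P * Q := by rw [hPQ]; exact Real.add_one_le_exp _
  have hxy2 : ε - 4 * p < x + y := by
    linarith only [hxy, hs]
  linarith only [hfin1, hεp, hp1,
    mul_le_mul_of_nonneg_left hfin2 hp.le,
    mul_lt_mul_of_pos_left hxy2 hp,
    mul_nonneg hp.le (by linarith only [hp1] : (0:ℝ) ≤ 1 - 2 * p)]
end

section
/- Let 0 < p ≤ 1/2, 0 < δ < p/2, ε > ln(4/p), β ≥ 2 and μ ∈ ℝ with μ ≠ 1, μ ≠ 1+ε. If F_{p,ε}(β,μ) = 1 and G_{p,ε}(β,μ) = 1−p+δ/2, then p − δ − 2e^{−ε} > 0 and β < ln(2p/δ) / (p − δ − 2e^{−ε}). -/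
lemma tanh_formula (x : ℝ) :
    Real.tanh x = (Real.exp x - Real.exp (-x)) / (Real.exp x + Real.exp (-x)) := by
  have h : Real.exp x + Real.exp (-x) ≠ 0 := by positivity
  rw [Real.tanh_eq_sinh_div_cosh, Real.sinh_eq, Real.cosh_eq]
  field_simp

lemma tanh_lt_one' (x : ℝ) : Real.tanh x < 1 := by
  rw [tanh_formula]
  have h : (0:ℝ) < Real.exp x + Real.exp (-x) := by positivity
  rw [div_lt_one h]
  have := Real.exp_pos (-x)
  linarith

lemma one_sub_tanh_le (x : ℝ) : 1 - Real.tanh x ≤ 2 * Real.exp (-(2*x)) := by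
  have h : (0:ℝ) < Real.exp x + Real.exp (-x) := by positivity
  have h2 : 1 - Real.tanh x = 2 * Real.exp (-x) / (Real.exp x + Real.exp (-x)) := by
    rw [tanh_formula]; field_simp; ring
  rw [h2]
  have h3 : 2 * Real.exp (-x) / (Real.exp x + Real.exp (-x)) ≤ 2 * Real.exp (-x) / Real.exp x := by
    apply div_le_div_of_nonneg_left (by positivity) (Real.exp_pos x) _
    have := Real.exp_pos (-x); linarith
  have h4 : 2 * Real.exp (-x) / Real.exp x = 2 * Real.exp (-(2*x)) := by
    rw [mul_div_assoc, ← Real.exp_sub]; ring_nf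
  linarith [h3, h4.le, h4.ge]

lemma one_add_tanh_le (x : ℝ) : 1 + Real.tanh x ≤ 2 * Real.exp (2*x) := by
  have := one_sub_tanh_le (-x)
  rw [Real.tanh_neg] at this
  have h : -(2 * -x) = 2 * x := by ring
  rw [h] at this; linarith

lemma tanh_pos_of_pos {x : ℝ} (hx : 0 < x) : 0 < Real.tanh x := by
  rw [tanh_formula]
  apply div_pos _ (by positivity)
  have : Real.exp (-x) < Real.exp x := Real.exp_lt_exp.mpr (by linarith)
  linarith

lemma tanh_neg_of_neg {x : ℝ} (hx : x < 0) : Real.tanh x < 0 := by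
  have := tanh_pos_of_pos (show 0 < -x by linarith)
  rw [Real.tanh_neg] at this; linarith

set_option maxHeartbeats 1000000 in
theorem stmt_6 (p ε δ β μ : ℝ) (hp : 0 < p) (hp1 : p ≤ 1 / 2)
    (hδ0 : 0 < δ) (hδ : δ < p / 2) (hε : Real.log (4 / p) < ε)
    (hβ : 2 ≤ β) (hμ1 : μ ≠ 1) (hμ2 : μ ≠ 1 + ε)
    (hF : F p ε β μ = 1) (hG : G p ε β μ = 1 - p + δ / 2) :
    0 < p - δ - 2 * Real.exp (-ε) ∧
    β < Real.log (2 * p / δ) / (p - δ - 2 * Real.exp (-ε)) := by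
  set a := μ - ε - 1 with ha_def
  set b := μ - 1 with hb_def
  set t1 := Real.tanh (β * a / 2) with ht1_def
  set t2 := Real.tanh (β * b / 2) with ht2_def
  have ha_ne : a ≠ 0 := by
    simp only [ha_def]; intro h; apply hμ2; linarith [sub_eq_zero.mp h]
  have hb_ne : b ≠ 0 := by
    simp only [hb_def]; intro h; apply hμ1; linarith [sub_eq_zero.mp h]
  -- ε > 2
  have h4p : (8:ℝ) ≤ 4 / p := by
    rw [le_div_iff₀ hp]; linarith
  have hlog8 : (2:ℝ) < Real.log 8 := by
    rw [Real.lt_log_iff_exp_lt (by norm_num)]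
    have h2 : Real.exp 2 = Real.exp 1 * Real.exp 1 := by
      rw [← Real.exp_add]; norm_num
    nlinarith [Real.exp_one_lt_d9, Real.exp_pos 1]
  have hε2 : (2:ℝ) < ε := by
    calc (2:ℝ) < Real.log 8 := hlog8
    _ ≤ Real.log (4/p) := Real.log_le_log (by norm_num) h4p
    _ < ε := hε
  -- part 1
  have hexpε : Real.exp (-ε) < p / 4 := by
    have h1 : Real.exp (-Real.log (4/p)) = p / 4 := by
      rw [Real.exp_neg, Real.exp_log (by positivity), inv_div]
    have h2 : Real.exp (-ε) < Real.exp (-Real.log (4/p)) := Real.exp_lt_exp.mpr (by linarith)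
    linarith
  have hc : 0 < p - δ - 2 * Real.exp (-ε) := by linarith
  refine ⟨hc, ?_⟩
  set c := p - δ - 2 * Real.exp (-ε) with hc_def
  -- equations
  have hS : p * t1 + (1 - p) * t2 = 1 - 2*p + δ := by
    have := hG; simp only [G] at this; linarith
  have hFe : p * t1 / a + (1 - p) * t2 / b = 1 := hF
  have hβpos : (0:ℝ) < β := by linarith
  -- tanh facts
  have ht1lt : t1 < 1 := tanh_lt_one' _
  have ht2lt : t2 < 1 := tanh_lt_one' _
  have hp1' : (0:ℝ) < 1 - p := by linarith
  -- b > 0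
  have hb : 0 < b := by
    rcases lt_or_gt_of_ne hb_ne with hbn | hbp
    · exfalso
      have h1 : t2 < 0 := tanh_neg_of_neg (by nlinarith)
      have h2 : a < 0 := by simp only [ha_def, hb_def] at *; linarith
      have h3 : t1 < 0 := tanh_neg_of_neg (by nlinarith)
      nlinarith
    · exact hbp
  have ht2pos : 0 < t2 := tanh_pos_of_pos (by positivity)
  have h1subt2 : 1 - t2 ≤ 2 * Real.exp (-(β * b)) := by
    have := one_sub_tanh_le (β * b / 2)
    have h : 2 * (β * b / 2) = β * b := by ring
    rwa [h] at this
  -- a < 0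
  have ha : a < 0 := by
    rcases lt_or_gt_of_ne ha_ne with h | hap
    · exact h
    exfalso
    have ht1pos : 0 < t1 := tanh_pos_of_pos (by positivity)
    have hab : b = a + ε := by simp only [ha_def, hb_def]; ring
    have hbe : ε < β * b := by nlinarith
    have he : Real.exp (-(β * b)) < Real.exp (-ε) := Real.exp_lt_exp.mpr (by linarith)
    -- p t1 = δ - p + (1-p)(1-t2)
    have key : p * t1 = δ - p + (1 - p) * (1 - t2) := by nlinarith
    nlinarith [mul_nonneg hp1'.le (show (0:ℝ) ≤ 1 - t2 by linarith)]
  -- key exponential bound: β * (-a) < L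
  have h1addt1 : 1 + t1 ≤ 2 * Real.exp (β * a) := by
    have := one_add_tanh_le (β * a / 2)
    have h : 2 * (β * a / 2) = β * a := by ring
    rwa [h] at this
  have key : p * (1 + t1) = δ + (1 - p) * (1 - t2) := by nlinarith
  have hpt1 : δ < p * (1 + t1) := by nlinarith
  have hexpa : δ / (2 * p) < Real.exp (β * a) := by
    rw [div_lt_iff₀ (by positivity)]
    nlinarith
  have hL0 : Real.log (δ / (2*p)) < β * a := by
    calc Real.log (δ / (2*p)) < Real.log (Real.exp (β * a)) :=
      Real.log_lt_log (by positivity) hexpa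
    _ = β * a := Real.log_exp _
  set L := Real.log (2 * p / δ) with hL_def
  have hLinv : L = - Real.log (δ / (2*p)) := by
    rw [hL_def, ← Real.log_inv]
    congr 1
    field_simp
  have hkey : β * (-a) < L := by rw [hLinv]; linarith
  have hLpos : 0 < L := by
    rw [hL_def]
    apply Real.log_pos
    rw [lt_div_iff₀ hδ0]; linarith
  -- final: show β * c < L
  rw [lt_div_iff₀ hc]
  rcases le_or_gt L ((β - 1) * ε) with hcase | hcase
  · -- case B
    have hab : b = a + ε := by simp only [ha_def, hb_def]; ring
    have hbe : ε < β * b := by nlinarith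
    have he : Real.exp (-(β * b)) < Real.exp (-ε) := Real.exp_lt_exp.mpr (by linarith)
    have hneg_t1 : c < p * (-t1) := by
      have h1 : (1 - p) * (1 - t2) ≤ 1 - t2 := by nlinarith
      have : p * (-t1) = p - δ - (1 - p) * (1 - t2) := by nlinarith
      rw [this, hc_def]; linarith
    -- from gap equation: p * t1 / a < 1
    have hterm2 : 0 < (1 - p) * t2 / b := by positivity
    have hterm1 : p * t1 / a < 1 := by linarith
    have hdiv : p * t1 / a = p * (-t1) / (-a) := by
      field_simp
    rw [hdiv, div_lt_one (by linarith)] at hterm1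
    have hca : c < -a := lt_trans hneg_t1 hterm1
    have := mul_lt_mul_of_pos_left hca hβpos
    linarith
  · -- case A
    have hLβ : β < L := by
      have h1 := mul_lt_mul_of_pos_left hε2 (show (0:ℝ) < β - 1 by linarith)
      linarith
    have hc1 : c < 1 := by
      have := Real.exp_pos (-ε); rw [hc_def]; linarith
    have := mul_lt_mul_of_pos_left hc1 hβpos
    linarith
end

section
/- Let p ∈ [0,1] and ε > 0, and set λ := (1/2)·(3 + √(9 + 2ε(1−2p+ε/2))) and μ := 1 + λ + ε/2. Then 9 + 2ε(1−2p+ε/2) > 0, λ > ε/2, and p·(1/(μ−ε−1) + 2/(2λ+1+ε−μ)) + (1−p)·(1/(μ−1) + 2/(2λ+1−μ)) = 1. -/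
/-!
With `a = λ - ε/2` and `b = λ + ε/2` the four denominators are `a, b, b, a`, so the gap equation
reads `(2 - p)/a + (1 + p)/b = 1`, i.e. `λ² - 3λ = ε²/4 + ε(1 - 2p)/2`. The given `λ` is the larger
root of this quadratic, whose discriminant is `9 + 2ε(1 - 2p + ε/2) ≥ 8 + (ε - 1)²`; that it exceeds
`(ε - 3)²` gives `λ > ε/2`.
-/

lemma half_add_sqrt_sq_sub {b d : ℝ} (hd : 0 ≤ d) :
    ((1 / 2) * (b + √d)) ^ 2 - b * ((1 / 2) * (b + √d)) = (d - b ^ 2) / 4 := by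
  linear_combination (1 / 4 : ℝ) * Real.sq_sqrt hd

lemma gap_sum_eq {lam μ : ℝ} (p ε : ℝ) (hμ : μ = 1 + lam + ε / 2) :
    p * (1 / (μ - ε - 1) + 2 / (2 * lam + 1 + ε - μ)) +
      (1 - p) * (1 / (μ - 1) + 2 / (2 * lam + 1 - μ)) =
      (2 - p) / (lam - ε / 2) + (1 + p) / (lam + ε / 2) := by
  subst hμ
  ring

section GapEquation

variable {p ε : ℝ}

lemma gap_discriminant_pos (hp1 : p ≤ 1) (hε : 0 ≤ ε) : 0 < 9 + 2 * ε * (1 - 2 * p + ε / 2) := by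
  nlinarith [sq_nonneg (ε - 1)]

lemma lt_three_add_sqrt_gap_discriminant (hp1 : p ≤ 1) (hε : 0 < ε) :
    ε < 3 + √(9 + 2 * ε * (1 - 2 * p + ε / 2)) := by
  have hsq : (ε - 3) ^ 2 < 9 + 2 * ε * (1 - 2 * p + ε / 2) := by nlinarith
  calc ε = 3 + (ε - 3) := by ring
    _ ≤ 3 + |ε - 3| := by gcongr; exact le_abs_self _
    _ = 3 + √((ε - 3) ^ 2) := by rw [Real.sqrt_sq_eq_abs]
    _ < 3 + √(9 + 2 * ε * (1 - 2 * p + ε / 2)) := by gcongr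

lemma gap_sum_eq_one {lam : ℝ} (hε : 0 ≤ ε) (hlt : ε / 2 < lam)
    (hquad : lam ^ 2 - 3 * lam = ε ^ 2 / 4 + ε * (1 - 2 * p) / 2) :
    (2 - p) / (lam - ε / 2) + (1 + p) / (lam + ε / 2) = 1 := by
  have ha : lam - ε / 2 ≠ 0 := by linarith
  have hb : lam + ε / 2 ≠ 0 := by linarith
  rw [div_add_div _ _ ha hb, div_eq_one_iff_eq (mul_ne_zero ha hb)]
  linear_combination -hquad

end GapEquation

theorem stmt_8_general (p ε lam μ : ℝ) (hp1 : p ≤ 1) (hε : 0 < ε)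
    (hlam : lam = (1 / 2) * (3 + Real.sqrt (9 + 2 * ε * (1 - 2 * p + ε / 2))))
    (hμ : μ = 1 + lam + ε / 2) :
    0 < 9 + 2 * ε * (1 - 2 * p + ε / 2) ∧
    ε / 2 < lam ∧
    p * (1 / (μ - ε - 1) + 2 / (2 * lam + 1 + ε - μ)) +
      (1 - p) * (1 / (μ - 1) + 2 / (2 * lam + 1 - μ)) = 1 := by
  have hD := gap_discriminant_pos hp1 hε.le
  have hlt : ε / 2 < lam := by
    rw [hlam]
    linarith [lt_three_add_sqrt_gap_discriminant hp1 hε]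
  have hquad : lam ^ 2 - 3 * lam = ε ^ 2 / 4 + ε * (1 - 2 * p) / 2 := by
    rw [hlam, half_add_sqrt_sq_sub hD.le]
    ring
  exact ⟨hD, hlt, (gap_sum_eq p ε hμ).trans (gap_sum_eq_one hε.le hlt hquad)⟩

theorem stmt_8 (p ε lam μ : ℝ) (hp0 : 0 ≤ p) (hp1 : p ≤ 1) (hε : 0 < ε)
    (hlam : lam = (1 / 2) * (3 + Real.sqrt (9 + 2 * ε * (1 - 2 * p + ε / 2))))
    (hμ : μ = 1 + lam + ε / 2) :
    0 < 9 + 2 * ε * (1 - 2 * p + ε / 2) ∧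
    ε / 2 < lam ∧
    p * (1 / (μ - ε - 1) + 2 / (2 * lam + 1 + ε - μ)) +
      (1 - p) * (1 / (μ - 1) + 2 / (2 * lam + 1 - μ)) = 1 :=
  stmt_8_general p ε lam μ hp1 hε hlam hμ
end

section
/- Let λ ≥ 3 and set ε := 2λ·√((λ−3)/(λ−1)). Then 0 ≤ ε < 2λ, λ − ε/2 > 0, and 1/(λ−ε/2) + 1/λ + 1/(λ+ε/2) = 1. -/
/-
Write `ε / 2 = λ s` with `s = √((λ - 3)/(λ - 1))`, so `0 ≤ s < 1` and `1 - s² = 2/(λ - 1)`.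
The three fractions then sum to `(1 + 2/(1 - s²))/λ = (1 + (λ - 1))/λ = 1`.
-/

open Real

lemma one_div_sub_mul_add_one_div_add_one_div_add_mul {lam s : ℝ} (hlam : lam ≠ 0)
    (hs : s ^ 2 < 1) :
    1 / (lam - lam * s) + 1 / lam + 1 / (lam + lam * s) = (1 + 2 / (1 - s ^ 2)) / lam := by
  have hminus : 1 - s ≠ 0 := by nlinarith
  have hplus : 1 + s ≠ 0 := by nlinarith
  have hprod : 1 - s ^ 2 ≠ 0 := by linarith
  rw [show lam - lam * s = lam * (1 - s) by ring, show lam + lam * s = lam * (1 + s) by ring]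
  field_simp
  ring

lemma one_sub_sq_sqrt_div (lam : ℝ) (hlam : 3 ≤ lam) :
    1 - √((lam - 3) / (lam - 1)) ^ 2 = 2 / (lam - 1) := by
  have hpos : 0 < lam - 1 := by linarith
  rw [sq_sqrt (div_nonneg (by linarith) hpos.le)]
  field_simp
  ring

theorem stmt_10 (lam ε : ℝ) (hlam : 3 ≤ lam)
    (hε : ε = 2 * lam * Real.sqrt ((lam - 3) / (lam - 1))) :
    0 ≤ ε ∧ ε < 2 * lam ∧ 0 < lam - ε / 2 ∧
    1 / (lam - ε / 2) + 1 / lam + 1 / (lam + ε / 2) = 1 := by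
  set s := √((lam - 3) / (lam - 1))
  have hs_nonneg : 0 ≤ s := sqrt_nonneg _
  have hgap : 1 - s ^ 2 = 2 / (lam - 1) := one_sub_sq_sqrt_div lam hlam
  have hgap_pos : 0 < 1 - s ^ 2 := hgap ▸ div_pos two_pos (by linarith)
  have hs_lt_one : s < 1 := by nlinarith
  have hhalf : ε / 2 = lam * s := by rw [hε]; ring
  refine ⟨by rw [hε]; positivity, by nlinarith, by nlinarith, ?_⟩
  have hlam0 : lam ≠ 0 := by linarith
  rw [hhalf, one_div_sub_mul_add_one_div_add_one_div_add_mul hlam0 (by linarith), hgap,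
    div_div_eq_mul_div, mul_div_cancel_left₀ _ two_ne_zero, add_sub_cancel, div_self hlam0]
end

section
/- Let β > 0, ε > 0 and ρ ∈ (0,1), and define μ := 1 + ε/2 + (1/β)·ln( sinh(βρε/2) / sinh(β(1−ρ)ε/2) ). Then (1/ε)·∫₀^ε tanh(β(μ−1−x)/2) dx = 2ρ − 1. -/
/-!
Since `log ∘ cosh` is an antiderivative of `tanh`, the integral equals
`(2/β) (log cosh (s + h) - log cosh (s - h))` with `h = βε/4` and `s = β(μ - 1)/2 - h`.
The choice of `μ` says exactly that `exp (2s) · sinh (h - d) = sinh (h + d)` with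
`d = β(2ρ - 1)ε/4`, and this forces `cosh (s + h) = exp (2d) · cosh (s - h)`.
-/

open Real

theorem Real.continuous_tanh : Continuous tanh :=
  (continuous_sinh.div continuous_cosh fun x => (cosh_pos x).ne').congr
    fun x => (tanh_eq_sinh_div_cosh x).symm

theorem Real.hasDerivAt_log_cosh (x : ℝ) : HasDerivAt (fun y => log (cosh y)) (tanh x) x := by
  simpa [tanh_eq_sinh_div_cosh] using (hasDerivAt_cosh x).log (cosh_pos x).ne'

theorem Real.integral_tanh (a b : ℝ) : ∫ x in a..b, tanh x = log (cosh b) - log (cosh a) :=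
  intervalIntegral.integral_eq_sub_of_hasDerivAt (fun x _ => hasDerivAt_log_cosh x)
    (continuous_tanh.intervalIntegrable a b)

theorem Real.cosh_add_eq_exp_mul_cosh_sub {s h d : ℝ}
    (hs : exp (2 * s) * sinh (h - d) = sinh (h + d)) :
    cosh (s + h) = exp (2 * d) * cosh (s - h) := by
  have exp_two_mul (x : ℝ) : exp (2 * x) = exp x ^ 2 := by rw [← exp_nat_mul]; norm_num
  simp only [cosh_eq, sinh_eq, exp_two_mul, exp_add, exp_sub, exp_neg] at hs ⊢
  have := exp_pos s
  have := exp_pos h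
  have := exp_pos d
  field_simp at hs ⊢
  linear_combination hs

theorem stmt_11 (β ε ρ μ : ℝ) (hβ : 0 < β) (hε : 0 < ε) (hρ0 : 0 < ρ) (hρ1 : ρ < 1)
    (hμ : μ = 1 + ε / 2 + (1 / β) *
      Real.log (Real.sinh (β * ρ * ε / 2) / Real.sinh (β * (1 - ρ) * ε / 2))) :
    (1 / ε) * ∫ x in (0 : ℝ)..ε, Real.tanh (β * (μ - 1 - x) / 2) = 2 * ρ - 1 := by
  set h := β * ε / 4
  set d := β * (2 * ρ - 1) * ε / 4
  set s := β * (μ - 1) / 2 - h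
  have hplus : h + d = β * ρ * ε / 2 := by ring
  have hminus : h - d = β * (1 - ρ) * ε / 2 := by ring
  have hs : exp (2 * s) * sinh (h - d) = sinh (h + d) := by
    have hsinh : 0 < sinh (β * (1 - ρ) * ε / 2) :=
      sinh_pos_iff.2 (by have := sub_pos.2 hρ1; positivity)
    have h2s : 2 * s = log (sinh (β * ρ * ε / 2) / sinh (β * (1 - ρ) * ε / 2)) := by
      simp only [s, h, hμ]; field_simp; ring
    rw [hplus, hminus, h2s, exp_log (div_pos (sinh_pos_iff.2 (by positivity)) hsinh),
      div_mul_cancel₀ _ hsinh.ne']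
  have hintegral : ∫ x in (0 : ℝ)..ε, tanh (β * (μ - 1 - x) / 2)
      = 2 / β * (log (cosh (s + h)) - log (cosh (s - h))) := by
    simp_rw [show ∀ x, β * (μ - 1 - x) / 2 = β * (μ - 1) / 2 - β / 2 * x from fun x => by ring]
    rw [intervalIntegral.integral_comp_sub_mul _ (by positivity), integral_tanh]
    simp only [s, h, smul_eq_mul, inv_div]
    ring_nf
  rw [hintegral, cosh_add_eq_exp_mul_cosh_sub hs, log_mul (exp_pos _).ne' (cosh_pos _).ne', log_exp]
  field_simp
  ring
end

section
/- Let ε > 0, k ∈ ℕ, and set t := ε/(2k+1) and λ := (ε/2)·(e^t + 1)/(e^t − 1). Then λ > ε/2, (1/ε)·∫₀^ε ( k/(λ + ε/2 − x) + (k+1)/(λ − ε/2 + x) ) dx = 1, and λ > 2k + 1. -/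
/-!
With `a = λ - ε/2 = ε/(eᵗ - 1)` one has `λ + ε/2 = eᵗ a`, so both terms of the integrand integrate
to a multiple of `log ((λ + ε/2)/(λ - ε/2)) = t`, and the integral is `(2k + 1) t = ε`. The bound
`λ > 2k + 1 = ε/t` is `(t/2) coth (t/2) > 1`, which is `log (1 + x) > 2x/(x + 2)` at `x = eᵗ - 1`.
-/

open Real intervalIntegral

theorem two_div_lt_exp_add_one_div_exp_sub_one {t : ℝ} (ht : 0 < t) :
    2 / t < (exp t + 1) / (exp t - 1) := by
  have hexp : 0 < exp t - 1 := sub_pos.mpr (one_lt_exp_iff.mpr ht)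
  have h := lt_log_one_add_of_pos hexp
  rw [add_sub_cancel, log_exp, div_lt_iff₀ (by linarith)] at h
  rw [div_lt_div_iff₀ ht hexp]
  linarith

theorem integral_div_sub_add_div_add (p q : ℝ) {a b : ℝ} (ha : 0 < a) (hab : a ≤ b) :
    ∫ x in (0 : ℝ)..b - a, (p / (b - x) + q / (a + x)) = (p + q) * log (b / a) := by
  have hne : ∀ y ∈ Set.uIcc a b, y ≠ 0 := fun y hy =>
    (ha.trans_le (Set.uIcc_of_le hab ▸ hy).1).ne'
  have hint : ∀ c, IntervalIntegrable (fun y => c / y) MeasureTheory.volume a b := fun c =>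
    (continuousOn_const.div continuousOn_id hne).intervalIntegrable
  have hlog : ∀ c, ∫ y in a..b, c / y = c * log (b / a) := fun c => by
    simp only [div_eq_mul_inv c, integral_const_mul, integral_inv_of_pos ha (ha.trans_le hab)]
  have h₁ := integral_comp_sub_left (fun y => p / y) (a := 0) (b := b - a) b
  have h₂ := integral_comp_add_left (fun y => q / y) (a := 0) (b := b - a) a
  rw [sub_sub_cancel, sub_zero] at h₁
  rw [add_zero, add_sub_cancel] at h₂
  rw [integral_add, h₁, h₂, hlog, hlog, add_mul]
  · simpa using ((hint p).comp_sub_left b).symm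
  · simpa using (hint q).comp_add_left a

theorem stmt_15 (ε : ℝ) (k : ℕ) (hε : 0 < ε)
    (t lam : ℝ) (ht : t = ε / (2 * k + 1))
    (hlam : lam = (ε / 2) * (Real.exp t + 1) / (Real.exp t - 1)) :
    ε / 2 < lam ∧
    (1 / ε) * ∫ x in (0 : ℝ)..ε,
      (k / (lam + ε / 2 - x) + (k + 1) / (lam - ε / 2 + x)) = 1 ∧
    2 * k + 1 < lam := by
  have ht₀ : 0 < t := by rw [ht]; positivity
  have hexp : 0 < exp t - 1 := sub_pos.mpr (one_lt_exp_iff.mpr ht₀)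
  have hlow : lam - ε / 2 = ε / (exp t - 1) := by rw [hlam]; field_simp; ring
  have hhigh : lam + ε / 2 = exp t * (lam - ε / 2) := by rw [hlow, hlam]; field_simp; ring
  have hlow₀ : 0 < lam - ε / 2 := hlow ▸ div_pos hε hexp
  refine ⟨by linarith, ?_, ?_⟩
  · have h := integral_div_sub_add_div_add k (k + 1) hlow₀ (b := lam + ε / 2) (by linarith)
    rw [hhigh, mul_div_cancel_right₀ _ hlow₀.ne', log_exp, ← hhigh,
      show lam + ε / 2 - (lam - ε / 2) = ε by ring] at h
    rw [h, ht]
    field_simp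
    ring
  · calc (2 * k + 1 : ℝ) = ε / 2 * (2 / t) := by rw [ht]; field_simp
      _ < ε / 2 * ((exp t + 1) / (exp t - 1)) :=
        mul_lt_mul_of_pos_left (two_div_lt_exp_add_one_div_exp_sub_one ht₀) (by positivity)
      _ = lam := by rw [hlam, mul_div_assoc]
end

section
/- Let 0 < ε < 2, β > 0 and ρ > 0. If (1/ε)·∫₀^ε 1/(e^{β(1−ε/2+x)} − 1) dx = ρ, then β > ln(1 + 1/ρ). -/
/-- Elementary strict convexity inequality: if `u*v = A^2` with `1 < u < v`, `1 < A`,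
then `2/(A-1) < 1/(u-1) + 1/(v-1)`. -/
lemma key_ineq (u v A : ℝ) (hu : 1 < u) (hA : 1 < A) (huv : u * v = A ^ 2)
    (hlt : u < v) : 2 / (A - 1) < 1 / (u - 1) + 1 / (v - 1) := by
  have hv : 1 < v := hu.trans hlt
  have h1 : 0 < u - 1 := by linarith
  have h2 : 0 < v - 1 := by linarith
  have h3 : 0 < A - 1 := by linarith
  have hs : 2 * A < u + v := by nlinarith [sq_nonneg (v - u), mul_pos h1 h2]
  rw [div_add_div _ _ h1.ne' h2.ne', div_lt_div_iff₀ h3 (mul_pos h1 h2)]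
  nlinarith

theorem stmt_16 (ε β ρ : ℝ) (hε0 : 0 < ε) (hε2 : ε < 2) (hβ : 0 < β) (hρ : 0 < ρ)
    (h : (1 / ε) * ∫ x in (0 : ℝ)..ε, 1 / (Real.exp (β * (1 - ε / 2 + x)) - 1) = ρ) :
    Real.log (1 + 1 / ρ) < β := by
  have hhalf : 0 < 1 - ε / 2 := by linarith
  set F : ℝ → ℝ := fun x => 1 / (Real.exp (β * (1 - ε / 2 + x)) - 1) with hF
  have hden : ∀ x ∈ Set.Icc (0:ℝ) ε, 0 < Real.exp (β * (1 - ε / 2 + x)) - 1 := by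
    intro x hx
    have hxpos : 0 < β * (1 - ε / 2 + x) := by
      have := hx.1
      have : 0 < 1 - ε / 2 + x := by linarith
      positivity
    have := Real.one_lt_exp_iff.mpr hxpos
    linarith
  have hcont : ContinuousOn F (Set.Icc 0 ε) := by
    apply ContinuousOn.div continuousOn_const
    · fun_prop
    · intro x hx; exact (hden x hx).ne'
  -- integrability on subintervals
  have hsub1 : Set.uIcc (0:ℝ) (ε/2) ⊆ Set.Icc 0 ε := by
    rw [Set.uIcc_of_le (by linarith)]
    exact Set.Icc_subset_Icc le_rfl (by linarith)
  have hsub2 : Set.uIcc (ε/2) ε ⊆ Set.Icc 0 ε := by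
    rw [Set.uIcc_of_le (by linarith)]
    exact Set.Icc_subset_Icc (by linarith) le_rfl
  have hint1 : IntervalIntegrable F MeasureTheory.volume 0 (ε/2) :=
    (hcont.mono hsub1).intervalIntegrable
  have hint2 : IntervalIntegrable F MeasureTheory.volume (ε/2) ε :=
    (hcont.mono hsub2).intervalIntegrable
  -- total integral equals ε * ρ
  have hI : ∫ x in (0:ℝ)..ε, F x = ε * ρ := by
    field_simp at h
    linarith [h]
  -- reflected integral
  have hrefl : ∫ x in (0:ℝ)..(ε/2), F (ε - x) = ∫ x in (ε/2)..ε, F x := by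
    rw [intervalIntegral.integral_comp_sub_left (a := 0) (b := ε/2) F ε]
    congr 1 <;> ring
  -- integrability of the reflected function
  have hintr : IntervalIntegrable (fun x => F (ε - x)) MeasureTheory.volume 0 (ε/2) := by
    apply ContinuousOn.intervalIntegrable
    apply hcont.comp (by fun_prop)
    intro x hx
    have hx' := hsub1 hx
    simp only [Set.mem_Icc] at hx' ⊢
    exact ⟨by linarith [hx'.2], by linarith [hx'.1]⟩
  -- pointwise strict positivity
  have hpt : ∀ x ∈ Set.Ioo (0:ℝ) (ε/2), 0 < F x + F (ε - x) - 2 * F (ε/2) := by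
    intro x hx
    obtain ⟨hx0, hx1⟩ := hx
    set u := Real.exp (β * (1 - ε / 2 + x)) with hu
    set v := Real.exp (β * (1 - ε / 2 + (ε - x))) with hv
    set A := Real.exp β with hA
    have hA1 : 1 < A := Real.one_lt_exp_iff.mpr hβ
    have hu1 : 1 < u := Real.one_lt_exp_iff.mpr (by nlinarith)
    have huv : u * v = A ^ 2 := by
      rw [hu, hv, hA, ← Real.exp_add, ← Real.exp_nat_mul]
      ring_nf
    have hlt : u < v := by
      apply Real.exp_lt_exp.mpr
      nlinarith
    have hkey := key_ineq u v A hu1 hA1 huv hlt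
    have hFh : F (ε/2) = 1 / (A - 1) := by
      rw [hF, hA]
      norm_num
    have : F x = 1 / (u - 1) := rfl
    have : F (ε - x) = 1 / (v - 1) := rfl
    rw [hFh]
    show 0 < 1 / (u - 1) + 1 / (v - 1) - 2 * (1 / (A - 1))
    have : 2 * (1 / (A - 1)) = 2 / (A - 1) := by ring
    rw [this]
    linarith
  -- positivity of the integral
  have hG : IntervalIntegrable (fun x => F x + F (ε - x) - 2 * F (ε/2)) MeasureTheory.volume 0 (ε/2) :=
    (hint1.add hintr).sub (intervalIntegrable_const)
  have hpos : 0 < ∫ x in (0:ℝ)..(ε/2), (F x + F (ε - x) - 2 * F (ε/2)) :=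
    intervalIntegral.intervalIntegral_pos_of_pos_on hG hpt (by linarith)
  rw [intervalIntegral.integral_sub (hint1.add hintr) intervalIntegrable_const,
      intervalIntegral.integral_add hint1 hintr, hrefl,
      intervalIntegral.integral_add_adjacent_intervals hint1 hint2, hI,
      intervalIntegral.integral_const] at hpos
  -- hpos : 0 < ε * ρ - (ε/2 - 0) • (2 * F (ε/2))
  have hFh : F (ε/2) = 1 / (Real.exp β - 1) := by
    rw [hF]; norm_num
  rw [hFh] at hpos
  simp only [smul_eq_mul, sub_zero] at hpos
  have hA1 : 0 < Real.exp β - 1 := by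
    have := Real.one_lt_exp_iff.mpr hβ; linarith
  have hρlt : 1 / (Real.exp β - 1) < ρ := by nlinarith
  rw [Real.log_lt_iff_lt_exp (by positivity)]
  rw [div_lt_iff₀ hA1] at hρlt
  have : 1 / ρ < Real.exp β - 1 := by
    rw [div_lt_iff₀ hρ]; nlinarith
  linarith
end
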